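/- Let G be a graph, M a maximum matching of G with |M| = m, and x, x' two distinct M-uncovered vertices. Let M_{x'} = {uv ∈ M : x' adjacent to both u and v} and M_x = {uv ∈ M : x adjacent to both u and v}. Then M_x ∩ M_{x'} = ∅, all neighbours of x lie in V(M − M_{x'}), all neighbours of x' lie in V(M − M_x), d(x') ≤ 4|M_{x'}| + 2|M − M_x − M_{x'}|, and d(x) ≤ 4|M_x| + 2|M − M_x − M_{x'}|. -/

import Mathlib

/-!
An edge between two uncovered vertices, or a matching edge `uv` with `x ~ u` and `x' ~ v`, would
be an augmenting path of length one or three. Hence every neighbour `w` of `x` is matched, and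
its partner is not adjacent to `x'`, so `N(x)` lies in `V(M - M_{x'})`; in particular `M_x` and
`M_{x'}` are disjoint. Counting two vertices per edge gives
`d(x) ≤ 2|M - M_{x'}| = 2|M_x| + 2|M - M_x - M_{x'}|`.
-/

open Finset

lemma card_le_two_mul_ncard_of_forall_exists_mem {V : Type*} {s : Finset V}
    {S : Set (Sym2 V)} (hS : S.Finite) (h : ∀ w ∈ s, ∃ e ∈ S, w ∈ e) :
    #s ≤ 2 * S.ncard := by
  classical
  rw [Set.ncard_eq_toFinset_card S hS]
  calc #s ≤ #(hS.toFinset.biUnion Sym2.toFinset) := by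
        refine card_le_card fun w hw => ?_
        obtain ⟨e, he, hwe⟩ := h w hw
        simpa using ⟨e, he, hwe⟩
    _ ≤ ∑ e ∈ hS.toFinset, #e.toFinset := card_biUnion_le
    _ ≤ ∑ _e ∈ hS.toFinset, 2 := sum_le_sum fun e _ => by
        rw [Sym2.card_toFinset]; split_ifs <;> omega
    _ = 2 * #hS.toFinset := by rw [sum_const, smul_eq_mul, mul_comm]

namespace SimpleGraph.Subgraph

variable {V : Type*} {G : SimpleGraph V} {M : G.Subgraph} {x x' y u v : V}

def IsMaximumMatching (M : G.Subgraph) : Prop :=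
  M.IsMatching ∧ ∀ M' : G.Subgraph, M'.IsMatching → M'.edgeSet.ncard ≤ M.edgeSet.ncard

/-- The paper's `M_x`. -/
def edgesInNeighborSet (M : G.Subgraph) (x : V) : Set (Sym2 V) :=
  {e ∈ M.edgeSet | ∀ y ∈ e, G.Adj x y}

lemma IsMatching.sup_subgraphOfAdj (hM : M.IsMatching) (hx : x ∉ M.verts) (hy : y ∉ M.verts)
    (hxy : G.Adj x y) : (M ⊔ G.subgraphOfAdj hxy).IsMatching := by
  refine hM.sup (.subgraphOfAdj hxy) ?_
  rw [hM.support_eq_verts, support_subgraphOfAdj, Set.disjoint_left]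
  rintro a ha (rfl | rfl)
  exacts [hx ha, hy ha]

lemma ncard_edgeSet_sup_subgraphOfAdj [Finite V] (hx : x ∉ M.verts) (hxy : G.Adj x y) :
    (M ⊔ G.subgraphOfAdj hxy).edgeSet.ncard = M.edgeSet.ncard + 1 := by
  have hnew : s(x, y) ∉ M.edgeSet := fun h =>
    hx (M.mem_verts_of_mem_edge h (Sym2.mem_mk_left x y))
  rw [edgeSet_sup, edgeSet_subgraphOfAdj, Set.union_singleton,
    Set.ncard_insert_of_notMem hnew]

lemma IsMatching.deleteVerts_pair (hM : M.IsMatching) (huv : M.Adj u v) :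
    (M.deleteVerts {u, v}).IsMatching := by
  intro w hw
  rw [deleteVerts_verts, Set.mem_sdiff, Set.mem_insert_iff, Set.mem_singleton_iff,
    not_or] at hw
  obtain ⟨hwM, hwu, hwv⟩ := hw
  obtain ⟨w', hww', huniq⟩ := hM hwM
  have hw'u : w' ≠ u := by rintro rfl; exact hwv (hM.eq_of_adj_right hww' huv.symm)
  have hw'v : w' ≠ v := by rintro rfl; exact hwu (hM.eq_of_adj_right hww' huv)
  refine ⟨w', ?_, fun z hz => huniq z (deleteVerts_adj.mp hz).2.2.2.2⟩
  simp only [deleteVerts_adj, Set.mem_insert_iff, Set.mem_singleton_iff]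
  exact ⟨hwM, by tauto, M.edge_vert hww'.symm, by tauto, hww'⟩

lemma IsMatching.edgeSet_deleteVerts_pair (hM : M.IsMatching) (huv : M.Adj u v) :
    (M.deleteVerts {u, v}).edgeSet = M.edgeSet \ {s(u, v)} := by
  ext e
  induction e using Sym2.ind with
  | _ a b =>
    simp only [Subgraph.mem_edgeSet, deleteVerts_adj, Set.mem_sdiff, Set.mem_insert_iff,
      Set.mem_singleton_iff, Sym2.eq_iff]
    constructor
    · rintro ⟨-, ha, -, hb, hab⟩
      exact ⟨hab, by tauto⟩
    · rintro ⟨hab, hne⟩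
      have ha : ¬(a = u ∨ a = v) := by
        rintro (rfl | rfl)
        · exact hne (.inl ⟨rfl, hM.eq_of_adj_left hab huv⟩)
        · exact hne (.inr ⟨rfl, hM.eq_of_adj_left hab huv.symm⟩)
      have hb : ¬(b = u ∨ b = v) := by
        rintro (rfl | rfl)
        · exact hne (.inr ⟨hM.eq_of_adj_right hab huv.symm, rfl⟩)
        · exact hne (.inl ⟨hM.eq_of_adj_right hab huv, rfl⟩)
      exact ⟨M.edge_vert hab, ha, M.edge_vert hab.symm, hb, hab⟩

lemma IsMatching.ncard_edgeSet_deleteVerts_pair_add_one [Finite V] (hM : M.IsMatching)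
    (huv : M.Adj u v) :
    (M.deleteVerts {u, v}).edgeSet.ncard + 1 = M.edgeSet.ncard := by
  rw [hM.edgeSet_deleteVerts_pair huv]
  exact Set.ncard_sdiff_singleton_add_one huv

namespace IsMaximumMatching

variable [Finite V]

lemma not_adj_of_notMem_verts (hM : M.IsMaximumMatching) (hx : x ∉ M.verts)
    (hy : y ∉ M.verts) : ¬G.Adj x y := fun hxy => by
  have := hM.2 _ (hM.1.sup_subgraphOfAdj hx hy hxy)
  rw [ncard_edgeSet_sup_subgraphOfAdj hx hxy] at this
  omega

lemma mem_verts_of_adj (hM : M.IsMaximumMatching) (hx : x ∉ M.verts) (hxy : G.Adj x y) :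
    y ∈ M.verts := by
  by_contra hy
  exact hM.not_adj_of_notMem_verts hx hy hxy

/-- Otherwise `x u v x'` is an augmenting path: trading `uv` for `xu` and `x'v` enlarges `M`. -/
lemma not_adj_of_adj_of_adj (hM : M.IsMaximumMatching) (hx : x ∉ M.verts)
    (hx' : x' ∉ M.verts) (hne : x ≠ x') (huv : M.Adj u v) (hxu : G.Adj x u) :
    ¬G.Adj x' v := fun hx'v => by
  have hcard := hM.1.ncard_edgeSet_deleteVerts_pair_add_one huv
  set N := M.deleteVerts {u, v}
  have hNverts : N.verts = M.verts \ {u, v} := deleteVerts_verts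
  have hxN : x ∉ N.verts := fun h => hx (hNverts ▸ h).1
  have huN : u ∉ N.verts := fun h => (hNverts ▸ h).2 (by simp)
  have hN : N.IsMatching := hM.1.deleteVerts_pair huv
  have hN₁ := hN.sup_subgraphOfAdj hxN huN hxu
  have hx'N₁ : x' ∉ (N ⊔ G.subgraphOfAdj hxu).verts := by
    simp only [verts_sup, subgraphOfAdj_verts, hNverts, Set.mem_union, Set.mem_sdiff,
      Set.mem_insert_iff, Set.mem_singleton_iff]
    rintro (⟨h, -⟩ | rfl | rfl)
    exacts [hx' h, hne rfl, hx' (M.edge_vert huv)]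
  have hvN₁ : v ∉ (N ⊔ G.subgraphOfAdj hxu).verts := by
    simp only [verts_sup, subgraphOfAdj_verts, hNverts, Set.mem_union, Set.mem_sdiff,
      Set.mem_insert_iff, Set.mem_singleton_iff]
    rintro (⟨-, h⟩ | rfl | rfl)
    exacts [h (by simp), hx (M.edge_vert huv.symm), (M.adj_sub huv).ne rfl]
  have := hM.2 _ (hN₁.sup_subgraphOfAdj hx'N₁ hvN₁ hx'v)
  rw [ncard_edgeSet_sup_subgraphOfAdj hx'N₁, ncard_edgeSet_sup_subgraphOfAdj hxN] at this
  omega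

lemma disjoint_edgesInNeighborSet (hM : M.IsMaximumMatching) (hx : x ∉ M.verts)
    (hx' : x' ∉ M.verts) (hne : x ≠ x') :
    Disjoint (M.edgesInNeighborSet x) (M.edgesInNeighborSet x') := by
  rw [Set.disjoint_left]
  rintro e ⟨he, hxe⟩ ⟨-, hx'e⟩
  induction e using Sym2.ind with
  | _ a b =>
    exact hM.not_adj_of_adj_of_adj hx hx' hne he (hxe a (Sym2.mem_mk_left a b))
      (hx'e b (Sym2.mem_mk_right a b))

lemma exists_mem_edgeSet_diff_edgesInNeighborSet (hM : M.IsMaximumMatching) (hx : x ∉ M.verts)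
    (hx' : x' ∉ M.verts) (hne : x ≠ x') (hxy : G.Adj x y) :
    ∃ e ∈ M.edgeSet \ M.edgesInNeighborSet x', y ∈ e := by
  obtain ⟨y', hyy', -⟩ := hM.1 (hM.mem_verts_of_adj hx hxy)
  refine ⟨s(y, y'), ⟨hyy', fun hx'e => ?_⟩, Sym2.mem_mk_left y y'⟩
  exact hM.not_adj_of_adj_of_adj hx hx' hne hyy' hxy (hx'e.2 y' (Sym2.mem_mk_right y y'))

lemma degree_le [Fintype (G.neighborSet x)] (hM : M.IsMaximumMatching) (hx : x ∉ M.verts)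
    (hx' : x' ∉ M.verts) (hne : x ≠ x') :
    G.degree x ≤ 4 * (M.edgesInNeighborSet x).ncard +
      2 * ((M.edgeSet \ M.edgesInNeighborSet x) \ M.edgesInNeighborSet x').ncard := by
  set A := M.edgesInNeighborSet x
  set B := M.edgesInNeighborSet x'
  have hA : A ⊆ M.edgeSet \ B := fun e he =>
    ⟨he.1, (hM.disjoint_edgesInNeighborSet hx hx' hne).notMem_of_mem_left he⟩
  have hsplit : (M.edgeSet \ B).ncard = ((M.edgeSet \ A) \ B).ncard + A.ncard := by
    rw [Set.sdiff_sdiff_comm, Set.ncard_sdiff_add_ncard_of_subset hA]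
  have hdeg : G.degree x ≤ 2 * (M.edgeSet \ B).ncard :=
    card_le_two_mul_ncard_of_forall_exists_mem (Set.toFinite _) fun y hy =>
      hM.exists_mem_edgeSet_diff_edgesInNeighborSet hx hx' hne ((G.mem_neighborFinset x y).mp hy)
  omega

end IsMaximumMatching

end SimpleGraph.Subgraph

theorem stmt_15_general {V : Type*} [Fintype V] (G : SimpleGraph V) [DecidableRel G.Adj]
    (M : G.Subgraph) (hM : M.IsMatching)
    (hmax : ∀ M' : G.Subgraph, M'.IsMatching → M'.edgeSet.ncard ≤ M.edgeSet.ncard)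
    (x x' : V) (hx : x ∉ M.verts) (hx' : x' ∉ M.verts) (hne : x ≠ x') :
    ({e ∈ M.edgeSet | ∀ y ∈ e, G.Adj x y} ∩ {e ∈ M.edgeSet | ∀ y ∈ e, G.Adj x' y}
        = ∅) ∧
    (∀ w : V, G.Adj x w →
      ∃ e ∈ M.edgeSet \ {e ∈ M.edgeSet | ∀ y ∈ e, G.Adj x' y}, w ∈ e) ∧
    (∀ w : V, G.Adj x' w →
      ∃ e ∈ M.edgeSet \ {e ∈ M.edgeSet | ∀ y ∈ e, G.Adj x y}, w ∈ e) ∧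
    (G.degree x' ≤ 4 * ({e ∈ M.edgeSet | ∀ y ∈ e, G.Adj x' y}).ncard +
      2 * ((M.edgeSet \ {e ∈ M.edgeSet | ∀ y ∈ e, G.Adj x y}) \
        {e ∈ M.edgeSet | ∀ y ∈ e, G.Adj x' y}).ncard) ∧
    (G.degree x ≤ 4 * ({e ∈ M.edgeSet | ∀ y ∈ e, G.Adj x y}).ncard +
      2 * ((M.edgeSet \ {e ∈ M.edgeSet | ∀ y ∈ e, G.Adj x y}) \
        {e ∈ M.edgeSet | ∀ y ∈ e, G.Adj x' y}).ncard) := by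
  have hM' : M.IsMaximumMatching := ⟨hM, hmax⟩
  have hdeg' := hM'.degree_le hx' hx hne.symm
  rw [Set.sdiff_sdiff_comm] at hdeg'
  exact ⟨Set.disjoint_iff_inter_eq_empty.mp (hM'.disjoint_edgesInNeighborSet hx hx' hne),
    fun _ => hM'.exists_mem_edgeSet_diff_edgesInNeighborSet hx hx' hne,
    fun _ => hM'.exists_mem_edgeSet_diff_edgesInNeighborSet hx' hx hne.symm,
    hdeg', hM'.degree_le hx hx' hne⟩

/-- counting facts around a maximum matching `M` and two distinct
uncovered vertices `x, x'`, with `M_x` (resp. `M_{x'}`) the matching edges with both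
endpoints adjacent to `x` (resp. `x'`). -/
theorem stmt_15 {V : Type*} [Fintype V] (G : SimpleGraph V) [DecidableRel G.Adj]
    (M : G.Subgraph) (hM : M.IsMatching) (m : ℕ) (hm : M.edgeSet.ncard = m)
    (hmax : ∀ M' : G.Subgraph, M'.IsMatching → M'.edgeSet.ncard ≤ M.edgeSet.ncard)
    (x x' : V) (hx : x ∉ M.verts) (hx' : x' ∉ M.verts) (hne : x ≠ x') :
    ({e ∈ M.edgeSet | ∀ y ∈ e, G.Adj x y} ∩ {e ∈ M.edgeSet | ∀ y ∈ e, G.Adj x' y}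
        = ∅) ∧
    (∀ w : V, G.Adj x w →
      ∃ e ∈ M.edgeSet \ {e ∈ M.edgeSet | ∀ y ∈ e, G.Adj x' y}, w ∈ e) ∧
    (∀ w : V, G.Adj x' w →
      ∃ e ∈ M.edgeSet \ {e ∈ M.edgeSet | ∀ y ∈ e, G.Adj x y}, w ∈ e) ∧
    (G.degree x' ≤ 4 * ({e ∈ M.edgeSet | ∀ y ∈ e, G.Adj x' y}).ncard +
      2 * ((M.edgeSet \ {e ∈ M.edgeSet | ∀ y ∈ e, G.Adj x y}) \
        {e ∈ M.edgeSet | ∀ y ∈ e, G.Adj x' y}).ncard) ∧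
    (G.degree x ≤ 4 * ({e ∈ M.edgeSet | ∀ y ∈ e, G.Adj x y}).ncard +
      2 * ((M.edgeSet \ {e ∈ M.edgeSet | ∀ y ∈ e, G.Adj x y}) \
        {e ∈ M.edgeSet | ∀ y ∈ e, G.Adj x' y}).ncard) :=
  stmt_15_general G M hM hmax x x' hx hx' hne
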